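/- arXiv:1901.01460 — 6 statements merged into one kernel-verified Lean document; each statement's English description precedes it below -/
import Mathlib

section
/- Theorem 1 (first part, 'after' values, unnormalized): Let U be a unitary on H_S⊗H_A commuting with L = L_S⊗1 + 1⊗L_A, let P^x be a projection on H_A commuting with L_A, and let O_S be self-adjoint on H_S commuting with L_S. If the state ρ on H_S commutes with L_S, then for any state ϱ on H_A, tr[(O_S ⊗ P^x) U(ρ⊗ϱ)U†] = tr[(O_S ⊗ P^x) U(ρ⊗Φ_{L_A}(ϱ))U†], where Φ_{L_A}(ϱ) = Σ_μ Q_A^μ ϱ Q_A^μ is the decoherence of ϱ with respect to the spectral projections Q_A^μ of L_A. -/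
open Matrix BigOperators Kronecker
open scoped ComplexOrder

/-! Expand `ϱ = ∑ μ ν, Q^μ ϱ Q^ν`. For `μ ≠ ν` the block `T = ρ ⊗ Q^μ ϱ Q^ν` satisfies
`[L, T] = (λ_μ - λ_ν) T`, because `ρ` commutes with `L_S` and `Q^μ` are eigenprojections of `L_A`;
conjugating by `U`, which commutes with `L`, preserves this. Since `A = O_S ⊗ P` also commutes with
`L`, `(λ_μ - λ_ν) tr(A M) = tr(A [L, M]) = tr([A, L] M) = 0` for `M = U T U†`, so only the diagonal
blocks `Q^μ ϱ Q^μ` contribute. -/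

theorem commutator_mul_mul_of_commute {α : Type*} [Ring α] {L U V M : α}
    (hU : Commute U L) (hV : Commute V L) :
    L * (U * M * V) - U * M * V * L = U * (L * M - M * L) * V := by
  have hL : L * (U * M * V) = U * (L * M) * V := by
    rw [← mul_assoc, ← mul_assoc, ← hU.eq, mul_assoc U L M]
  have hR : U * M * V * L = U * (M * L) * V := by
    rw [mul_assoc _ V L, hV.eq, ← mul_assoc, mul_assoc U M L]
  rw [hL, hR, ← sub_mul, ← mul_sub]

theorem map_eq_map_sum_mul_mul {α M ι : Type*} [Semiring α] [AddCommMonoid M] [Fintype ι]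
    (φ : α →+ M) {Q : ι → α} (hQ : ∑ μ, Q μ = 1) (X : α)
    (hoff : ∀ μ ν, μ ≠ ν → φ (Q μ * X * Q ν) = 0) :
    φ X = φ (∑ μ, Q μ * X * Q μ) := by
  have hX : X = ∑ μ, ∑ ν, Q μ * X * Q ν := by
    simp only [← Finset.mul_sum, ← Finset.sum_mul, hQ, one_mul, mul_one]
  conv_lhs => rw [hX]
  simp only [map_sum]
  refine Finset.sum_congr rfl fun μ _ =>
    Finset.sum_eq_single μ (fun ν _ hνμ => hoff μ ν hνμ.symm) fun h => absurd (Finset.mem_univ μ) h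

namespace Matrix

variable {R : Type*} [CommRing R] {m n : Type*} [Fintype m] [Fintype n]

theorem trace_mul_eq_zero_of_commutator_eq_smul [NoZeroDivisors R] {A L M : Matrix n n R} {c : R}
    (hc : c ≠ 0) (hAL : Commute A L) (hM : L * M - M * L = c • M) : (A * M).trace = 0 := by
  have : c * (A * M).trace = 0 := by
    rw [← smul_eq_mul, ← trace_smul, ← Matrix.mul_smul, ← hM, mul_sub, trace_sub, ← mul_assoc,
      hAL.eq, mul_assoc, trace_mul_comm L, mul_assoc, sub_self]
  exact (mul_eq_zero.1 this).resolve_left hc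

theorem commute_kronecker_kroneckerSum [DecidableEq m] [DecidableEq n]
    {A LS : Matrix m m R} {B LA : Matrix n n R}
    (hA : Commute A LS) (hB : Commute B LA) : Commute (A ⊗ₖ B) (LS ⊗ₖ 1 + 1 ⊗ₖ LA) := by
  simp only [Commute, SemiconjBy, mul_add, add_mul, ← mul_kronecker_mul, Matrix.one_mul,
    Matrix.mul_one, hA.eq, hB.eq]

theorem kroneckerSum_commutator_kronecker [DecidableEq m] [DecidableEq n]
    {ρ LS : Matrix m m R} {Y LA : Matrix n n R} {a b : R}
    (hρ : Commute ρ LS) (hY : LA * Y = a • Y) (hY' : Y * LA = b • Y) :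
    (LS ⊗ₖ 1 + 1 ⊗ₖ LA) * (ρ ⊗ₖ Y) - (ρ ⊗ₖ Y) * (LS ⊗ₖ 1 + 1 ⊗ₖ LA) = (a - b) • (ρ ⊗ₖ Y) := by
  simp only [mul_add, add_mul, ← mul_kronecker_mul, Matrix.one_mul, Matrix.mul_one, hρ.eq, hY, hY',
    kronecker_smul, sub_smul]
  abel

section Orthogonal

variable {ι : Type*} [Fintype ι] [DecidableEq ι] {Q : ι → Matrix n n R}

theorem sum_smul_mul_of_orthogonal (hQ : ∀ μ ν, Q μ * Q ν = if μ = ν then Q μ else 0)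
    (lam : ι → R) (μ : ι) : (∑ ν, lam ν • Q ν) * Q μ = lam μ • Q μ := by
  simp only [Finset.sum_mul, smul_mul_assoc, hQ, smul_ite, smul_zero, Finset.sum_ite_eq',
    Finset.mem_univ, if_true]

theorem mul_sum_smul_of_orthogonal (hQ : ∀ μ ν, Q μ * Q ν = if μ = ν then Q μ else 0)
    (lam : ι → R) (μ : ι) : Q μ * (∑ ν, lam ν • Q ν) = lam μ • Q μ := by
  simp only [Finset.mul_sum, mul_smul_comm, hQ, smul_ite, smul_zero, Finset.sum_ite_eq,
    Finset.mem_univ, if_true]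

end Orthogonal

end Matrix

theorem thm1_after_apparatus_decoherence_general {dS dA : ℕ} {ιA : Type*} [Fintype ιA] [DecidableEq ιA]
    (LS : Matrix (Fin dS) (Fin dS) ℂ)
    (LA : Matrix (Fin dA) (Fin dA) ℂ)
    (QA : ιA → Matrix (Fin dA) (Fin dA) ℂ)
    (hQAorth : ∀ μ ν, QA μ * QA ν = if μ = ν then QA μ else 0)
    (hQAsum : ∑ μ, QA μ = 1)
    (lamA : ιA → ℝ) (hlamA : Function.Injective lamA)
    (hLAspec : LA = ∑ μ, (lamA μ : ℂ) • QA μ)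
    (U : Matrix (Fin dS × Fin dA) (Fin dS × Fin dA) ℂ)
    (hU : U ∈ Matrix.unitaryGroup (Fin dS × Fin dA) ℂ)
    (hUL : U * (LS ⊗ₖ (1 : Matrix (Fin dA) (Fin dA) ℂ)
             + (1 : Matrix (Fin dS) (Fin dS) ℂ) ⊗ₖ LA)
         = (LS ⊗ₖ (1 : Matrix (Fin dA) (Fin dA) ℂ)
             + (1 : Matrix (Fin dS) (Fin dS) ℂ) ⊗ₖ LA) * U)
    (P : Matrix (Fin dA) (Fin dA) ℂ)
    (hPL : P * LA = LA * P)
    (OS : Matrix (Fin dS) (Fin dS) ℂ) (hOSL : OS * LS = LS * OS)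
    (ρ : Matrix (Fin dS) (Fin dS) ℂ)
    (hρL : ρ * LS = LS * ρ)
    (ϱ : Matrix (Fin dA) (Fin dA) ℂ) :
    ((OS ⊗ₖ P) * (U * (ρ ⊗ₖ ϱ) * Uᴴ)).trace
      = ((OS ⊗ₖ P) * (U * (ρ ⊗ₖ (∑ μ, QA μ * ϱ * QA μ)) * Uᴴ)).trace := by
  set L := LS ⊗ₖ (1 : Matrix (Fin dA) (Fin dA) ℂ) + (1 : Matrix (Fin dS) (Fin dS) ℂ) ⊗ₖ LA
  have hUstarL : Commute Uᴴ L := by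
    simpa [star_eq_conjTranspose] using (Commute.units_inv_left (u := Unitary.toUnits ⟨U, hU⟩) hUL)
  let φ : Matrix (Fin dA) (Fin dA) ℂ →+ ℂ :=
    AddMonoidHom.mk' (fun X => ((OS ⊗ₖ P) * (U * (ρ ⊗ₖ X) * Uᴴ)).trace) fun X Y => by
      simp only [kronecker_add, mul_add, add_mul, trace_add]
  refine map_eq_map_sum_mul_mul φ hQAsum ϱ fun μ ν hμν => ?_
  have hc : (lamA μ : ℂ) - lamA ν ≠ 0 := sub_ne_zero.2 (Complex.ofReal_injective.ne (hlamA.ne hμν))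
  subst hLAspec
  refine trace_mul_eq_zero_of_commutator_eq_smul hc (commute_kronecker_kroneckerSum hOSL hPL) ?_
  rw [commutator_mul_mul_of_commute hUL hUstarL, kroneckerSum_commutator_kronecker hρL,
    mul_smul_comm, smul_mul_assoc]
  · rw [← mul_assoc, ← mul_assoc, sum_smul_mul_of_orthogonal hQAorth, smul_mul_assoc,
      smul_mul_assoc]
  · rw [mul_assoc, mul_sum_smul_of_orthogonal hQAorth, mul_smul_comm]

/-- Theorem 1, first part, 'after' values, unnormalized:
U unitary commuting with L_S⊗1+1⊗L_A, Pˣ a projection commuting with L_A,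
O_S self-adjoint commuting with L_S.  If ρ commutes with L_S, then for any
apparatus state ϱ, tr[(O_S⊗Pˣ)U(ρ⊗ϱ)U†] = tr[(O_S⊗Pˣ)U(ρ⊗Φ_{L_A}(ϱ))U†],
where Φ_{L_A}(ϱ) = Σ_μ Q_A^μ ϱ Q_A^μ with Q_A^μ the spectral projections of L_A. -/
theorem thm1_after_apparatus_decoherence {dS dA : ℕ} {ιA : Type*} [Fintype ιA] [DecidableEq ιA]
    (LS : Matrix (Fin dS) (Fin dS) ℂ) (hLS : LS.IsHermitian)
    (LA : Matrix (Fin dA) (Fin dA) ℂ) (hLA : LA.IsHermitian)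
    (QA : ιA → Matrix (Fin dA) (Fin dA) ℂ)
    (hQAherm : ∀ μ, (QA μ).IsHermitian)
    (hQAorth : ∀ μ ν, QA μ * QA ν = if μ = ν then QA μ else 0)
    (hQAsum : ∑ μ, QA μ = 1)
    (lamA : ιA → ℝ) (hlamA : Function.Injective lamA)
    (hLAspec : LA = ∑ μ, (lamA μ : ℂ) • QA μ)
    (U : Matrix (Fin dS × Fin dA) (Fin dS × Fin dA) ℂ)
    (hU : U ∈ Matrix.unitaryGroup (Fin dS × Fin dA) ℂ)
    (hUL : U * (LS ⊗ₖ (1 : Matrix (Fin dA) (Fin dA) ℂ)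
             + (1 : Matrix (Fin dS) (Fin dS) ℂ) ⊗ₖ LA)
         = (LS ⊗ₖ (1 : Matrix (Fin dA) (Fin dA) ℂ)
             + (1 : Matrix (Fin dS) (Fin dS) ℂ) ⊗ₖ LA) * U)
    (P : Matrix (Fin dA) (Fin dA) ℂ) (hPproj : P * P = P) (hPherm : P.IsHermitian)
    (hPL : P * LA = LA * P)
    (OS : Matrix (Fin dS) (Fin dS) ℂ) (hOS : OS.IsHermitian) (hOSL : OS * LS = LS * OS)
    (ρ : Matrix (Fin dS) (Fin dS) ℂ) (hρ : ρ.PosSemidef) (hρtr : ρ.trace = 1)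
    (hρL : ρ * LS = LS * ρ)
    (ϱ : Matrix (Fin dA) (Fin dA) ℂ) (hϱ : ϱ.PosSemidef) (hϱtr : ϱ.trace = 1) :
    ((OS ⊗ₖ P) * (U * (ρ ⊗ₖ ϱ) * Uᴴ)).trace
      = ((OS ⊗ₖ P) * (U * (ρ ⊗ₖ (∑ μ, QA μ * ϱ * QA μ)) * Uᴴ)).trace :=
  thm1_after_apparatus_decoherence_general LS LA QA hQAorth hQAsum lamA hlamA hLAspec U hU hUL P hPL
    OS hOSL ρ hρL ϱ
end

section
/- Theorem 1 (second part, 'after' values, unnormalized): Let U be a unitary on H_S⊗H_A commuting with L = L_S⊗1 + 1⊗L_A, let P^x be a projection on H_A commuting with L_A, and let O_S be self-adjoint on H_S commuting with L_S. If the apparatus state ϱ commutes with L_A, then for every state ρ on H_S, tr[(O_S ⊗ P^x) U(ρ⊗ϱ)U†] = tr[(O_S ⊗ P^x) U(Φ_{L_S}(ρ)⊗ϱ)U†], where Φ_{L_S}(ρ) = Σ_m Q_S^m ρ Q_S^m. -/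
open Matrix BigOperators Kronecker
open scoped ComplexOrder

private lemma sum_kron_aux {dS dA : ℕ} {ι : Type*} (s : Finset ι)
    (f : ι → Matrix (Fin dS) (Fin dS) ℂ) (Bm : Matrix (Fin dA) (Fin dA) ℂ) :
    (∑ i ∈ s, f i) ⊗ₖ Bm = ∑ i ∈ s, (f i) ⊗ₖ Bm := by
  ext ⟨a, b⟩ ⟨c, d⟩
  simp [Matrix.kroneckerMap_apply, Matrix.sum_apply, Finset.sum_mul]

/-- Theorem 1, second part, 'after' values, unnormalized:
U unitary commuting with L_S⊗1+1⊗L_A, Pˣ a projection commuting with L_A,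
O_S self-adjoint commuting with L_S.  If the apparatus state ϱ commutes with
L_A, then for every state ρ on H_S,
tr[(O_S⊗Pˣ)U(ρ⊗ϱ)U†] = tr[(O_S⊗Pˣ)U(Φ_{L_S}(ρ)⊗ϱ)U†],
where Φ_{L_S}(ρ) = Σ_m Q_S^m ρ Q_S^m with Q_S^m the spectral projections of L_S. -/
theorem thm1_after_system_decoherence {dS dA : ℕ} {ιS : Type*} [Fintype ιS] [DecidableEq ιS]
    (LS : Matrix (Fin dS) (Fin dS) ℂ) (hLS : LS.IsHermitian)
    (LA : Matrix (Fin dA) (Fin dA) ℂ) (hLA : LA.IsHermitian)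
    (QS : ιS → Matrix (Fin dS) (Fin dS) ℂ)
    (hQSherm : ∀ m, (QS m).IsHermitian)
    (hQSorth : ∀ m n, QS m * QS n = if m = n then QS m else 0)
    (hQSsum : ∑ m, QS m = 1)
    (lamS : ιS → ℝ) (hlamS : Function.Injective lamS)
    (hLSspec : LS = ∑ m, (lamS m : ℂ) • QS m)
    (U : Matrix (Fin dS × Fin dA) (Fin dS × Fin dA) ℂ)
    (hU : U ∈ Matrix.unitaryGroup (Fin dS × Fin dA) ℂ)
    (hUL : U * (LS ⊗ₖ (1 : Matrix (Fin dA) (Fin dA) ℂ)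
             + (1 : Matrix (Fin dS) (Fin dS) ℂ) ⊗ₖ LA)
         = (LS ⊗ₖ (1 : Matrix (Fin dA) (Fin dA) ℂ)
             + (1 : Matrix (Fin dS) (Fin dS) ℂ) ⊗ₖ LA) * U)
    (P : Matrix (Fin dA) (Fin dA) ℂ) (hPproj : P * P = P) (hPherm : P.IsHermitian)
    (hPL : P * LA = LA * P)
    (OS : Matrix (Fin dS) (Fin dS) ℂ) (hOS : OS.IsHermitian) (hOSL : OS * LS = LS * OS)
    (ϱ : Matrix (Fin dA) (Fin dA) ℂ) (hϱ : ϱ.PosSemidef) (hϱtr : ϱ.trace = 1)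
    (hϱL : ϱ * LA = LA * ϱ)
    (ρ : Matrix (Fin dS) (Fin dS) ℂ) (hρ : ρ.PosSemidef) (hρtr : ρ.trace = 1) :
    ((OS ⊗ₖ P) * (U * (ρ ⊗ₖ ϱ) * Uᴴ)).trace
      = ((OS ⊗ₖ P) * (U * ((∑ m, QS m * ρ * QS m) ⊗ₖ ϱ) * Uᴴ)).trace := by
  classical
  set L : Matrix (Fin dS × Fin dA) (Fin dS × Fin dA) ℂ :=
    LS ⊗ₖ (1 : Matrix (Fin dA) (Fin dA) ℂ)
      + (1 : Matrix (Fin dS) (Fin dS) ℂ) ⊗ₖ LA with hLdef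
  set B := OS ⊗ₖ P with hBdef
  have hUU : Uᴴ * U = 1 := by
    simpa [Matrix.star_eq_conjTranspose] using hU.1
  have hUU' : U * Uᴴ = 1 := by
    simpa [Matrix.star_eq_conjTranspose] using hU.2
  set A := Uᴴ * B * U with hAdef
  have hUHL : Uᴴ * L = L * Uᴴ := by
    calc Uᴴ * L = Uᴴ * (L * (U * Uᴴ)) := by rw [hUU', mul_one]
    _ = Uᴴ * ((L * U) * Uᴴ) := by noncomm_ring
    _ = Uᴴ * ((U * L) * Uᴴ) := by rw [hUL]
    _ = (Uᴴ * U) * (L * Uᴴ) := by noncomm_ring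
    _ = L * Uᴴ := by rw [hUU, one_mul]
  have hBL : B * L = L * B := by
    rw [hBdef, hLdef, mul_add, add_mul,
      ← Matrix.mul_kronecker_mul, ← Matrix.mul_kronecker_mul,
      ← Matrix.mul_kronecker_mul, ← Matrix.mul_kronecker_mul,
      hOSL, hPL, mul_one, one_mul, mul_one, one_mul]
  have hAL : A * L = L * A := by
    calc A * L = Uᴴ * B * (U * L) := by rw [hAdef, mul_assoc]
    _ = Uᴴ * (B * L) * U := by rw [hUL]; noncomm_ring
    _ = Uᴴ * L * (B * U) := by rw [hBL]; noncomm_ring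
    _ = L * A := by rw [hUHL, hAdef]; noncomm_ring
  have hLQ : ∀ m, LS * QS m = (lamS m : ℂ) • QS m := by
    intro m
    rw [hLSspec, Finset.sum_mul]
    simp [smul_mul_assoc, hQSorth, Finset.sum_ite_eq']
  have hQL : ∀ n, QS n * LS = (lamS n : ℂ) • QS n := by
    intro n
    rw [hLSspec, Finset.mul_sum]
    simp [mul_smul_comm, hQSorth]
  have key : ∀ m n, m ≠ n → (A * ((QS m * ρ * QS n) ⊗ₖ ϱ)).trace = 0 := by
    intro m n hmn
    set X := (QS m * ρ * QS n) ⊗ₖ ϱ with hX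
    have hLX : L * X = X * L + (((lamS m : ℂ) - (lamS n : ℂ)) • X) := by
      have h1 : (LS ⊗ₖ (1 : Matrix (Fin dA) (Fin dA) ℂ)) * X = (lamS m : ℂ) • X := by
        rw [hX, ← Matrix.mul_kronecker_mul, one_mul, ← mul_assoc, ← mul_assoc, hLQ m,
          smul_mul_assoc, smul_mul_assoc, Matrix.smul_kronecker]
      have h2 : X * (LS ⊗ₖ (1 : Matrix (Fin dA) (Fin dA) ℂ)) = (lamS n : ℂ) • X := by
        rw [hX, ← Matrix.mul_kronecker_mul, mul_one, mul_assoc, hQL n,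
          mul_smul_comm, Matrix.smul_kronecker]
      have h3 : ((1 : Matrix (Fin dS) (Fin dS) ℂ) ⊗ₖ LA) * X
          = X * ((1 : Matrix (Fin dS) (Fin dS) ℂ) ⊗ₖ LA) := by
        rw [hX, ← Matrix.mul_kronecker_mul, ← Matrix.mul_kronecker_mul,
          one_mul, mul_one, hϱL]
      rw [hLdef, add_mul, mul_add, h1, h2, h3, sub_smul]
      abel
    have h0 : (A * (L * X)).trace = (A * (X * L)).trace := by
      calc (A * (L * X)).trace = ((L * A) * X).trace := by rw [← hAL]; noncomm_ring
      _ = ((A * X) * L).trace := by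
          rw [mul_assoc, Matrix.trace_mul_comm]
      _ = (A * (X * L)).trace := by rw [mul_assoc]
    have h4 : (((lamS m : ℂ) - (lamS n : ℂ)) • (A * X)).trace = 0 := by
      have heq : A * (L * X) = A * (X * L) + ((lamS m : ℂ) - (lamS n : ℂ)) • (A * X) := by
        rw [hLX, mul_add, mul_smul_comm]
      have h5 := congrArg Matrix.trace heq
      rw [Matrix.trace_add, h0] at h5
      exact (left_eq_add.mp h5)
    have hc : ((lamS m : ℂ) - (lamS n : ℂ)) ≠ 0 := by
      rw [sub_ne_zero]
      exact_mod_cast fun h => hmn (hlamS (by exact_mod_cast h))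
    rw [Matrix.trace_smul, smul_eq_mul] at h4
    exact (mul_eq_zero.mp h4).resolve_left hc
  -- rewrite traces with A
  have htr : ∀ R : Matrix (Fin dS × Fin dA) (Fin dS × Fin dA) ℂ,
      (B * (U * R * Uᴴ)).trace = (A * R).trace := by
    intro R
    calc (B * (U * R * Uᴴ)).trace = ((B * (U * R)) * Uᴴ).trace := by noncomm_ring
    _ = (Uᴴ * (B * (U * R))).trace := by rw [Matrix.trace_mul_comm]
    _ = (A * R).trace := by rw [hAdef]; noncomm_ring
  rw [htr, htr]
  have hρdecomp : ρ ⊗ₖ ϱ = ∑ m, ∑ n, (QS m * ρ * QS n) ⊗ₖ ϱ := by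
    have : ρ = ∑ m, ∑ n, QS m * ρ * QS n := by
      calc ρ = (∑ m, QS m) * ρ * (∑ n, QS n) := by rw [hQSsum, one_mul, mul_one]
      _ = ∑ m, ∑ n, QS m * ρ * QS n := by
          rw [Finset.sum_mul, Finset.sum_mul]
          exact Finset.sum_congr rfl fun m _ => by rw [Finset.mul_sum]
    conv_lhs => rw [this]
    rw [sum_kron_aux]
    exact Finset.sum_congr rfl fun m _ => by rw [sum_kron_aux]
  rw [hρdecomp, sum_kron_aux]
  simp only [Finset.mul_sum, Matrix.trace_sum]
  refine Finset.sum_congr rfl fun m _ => ?_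
  rw [Finset.sum_eq_single m (fun n _ hn => key m n (Ne.symm hn))
    (fun h => absurd (Finset.mem_univ m) h)]
end

section
/- Theorem 1 (first part, 'before' values, unnormalized): under the same symmetry assumptions — U unitary on H_S⊗H_A with [U, L_S⊗1 + 1⊗L_A]=0, [P^x, L_A]=0, [O_S, L_S]=0 — if ρ commutes with L_S, then Re tr[(1 ⊗ P^x) U((O_S ρ + ρ O_S) ⊗ ϱ)U†] = Re tr[(1 ⊗ P^x) U((O_S ρ + ρ O_S) ⊗ Φ_{L_A}(ϱ))U†] for every density operator ϱ on H_A. -/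
open Matrix BigOperators Kronecker
open scoped ComplexOrder

set_option maxHeartbeats 1000000 in
/-- Theorem 1, first part, 'before' values, unnormalized:
with U unitary commuting with L_S⊗1+1⊗L_A, Pˣ commuting with L_A, O_S
commuting with L_S, and ρ commuting with L_S,
Re tr[(1⊗Pˣ)U((O_Sρ+ρO_S)⊗ϱ)U†] = Re tr[(1⊗Pˣ)U((O_Sρ+ρO_S)⊗Φ_{L_A}(ϱ))U†]
for every density operator ϱ on H_A. -/
theorem thm1_before_apparatus_decoherence {dS dA : ℕ} {ιA : Type*} [Fintype ιA] [DecidableEq ιA]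
    (LS : Matrix (Fin dS) (Fin dS) ℂ) (hLS : LS.IsHermitian)
    (LA : Matrix (Fin dA) (Fin dA) ℂ) (hLA : LA.IsHermitian)
    (QA : ιA → Matrix (Fin dA) (Fin dA) ℂ)
    (hQAherm : ∀ μ, (QA μ).IsHermitian)
    (hQAorth : ∀ μ ν, QA μ * QA ν = if μ = ν then QA μ else 0)
    (hQAsum : ∑ μ, QA μ = 1)
    (lamA : ιA → ℝ) (hlamA : Function.Injective lamA)
    (hLAspec : LA = ∑ μ, (lamA μ : ℂ) • QA μ)
    (U : Matrix (Fin dS × Fin dA) (Fin dS × Fin dA) ℂ)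
    (hU : U ∈ Matrix.unitaryGroup (Fin dS × Fin dA) ℂ)
    (hUL : U * (LS ⊗ₖ (1 : Matrix (Fin dA) (Fin dA) ℂ)
             + (1 : Matrix (Fin dS) (Fin dS) ℂ) ⊗ₖ LA)
         = (LS ⊗ₖ (1 : Matrix (Fin dA) (Fin dA) ℂ)
             + (1 : Matrix (Fin dS) (Fin dS) ℂ) ⊗ₖ LA) * U)
    (P : Matrix (Fin dA) (Fin dA) ℂ) (hPproj : P * P = P) (hPherm : P.IsHermitian)
    (hPL : P * LA = LA * P)
    (OS : Matrix (Fin dS) (Fin dS) ℂ) (hOS : OS.IsHermitian) (hOSL : OS * LS = LS * OS)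
    (ρ : Matrix (Fin dS) (Fin dS) ℂ) (hρ : ρ.PosSemidef) (hρtr : ρ.trace = 1)
    (hρL : ρ * LS = LS * ρ)
    (ϱ : Matrix (Fin dA) (Fin dA) ℂ) (hϱ : ϱ.PosSemidef) (hϱtr : ϱ.trace = 1) :
    ((((1 : Matrix (Fin dS) (Fin dS) ℂ) ⊗ₖ P) *
        (U * ((OS * ρ + ρ * OS) ⊗ₖ ϱ) * Uᴴ)).trace).re
      = ((((1 : Matrix (Fin dS) (Fin dS) ℂ) ⊗ₖ P) *
        (U * ((OS * ρ + ρ * OS) ⊗ₖ (∑ μ, QA μ * ϱ * QA μ)) * Uᴴ)).trace).re := by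
  classical
  have hUU : Uᴴ * U = 1 := by
    simpa [Matrix.star_eq_conjTranspose] using (Matrix.mem_unitaryGroup_iff'.mp hU)
  have hUU' : U * Uᴴ = 1 := by
    simpa [Matrix.star_eq_conjTranspose] using (Matrix.mem_unitaryGroup_iff.mp hU)
  set M : Matrix (Fin dS) (Fin dS) ℂ := OS * ρ + ρ * OS with hMdef
  set L : Matrix (Fin dS × Fin dA) (Fin dS × Fin dA) ℂ :=
    LS ⊗ₖ (1 : Matrix (Fin dA) (Fin dA) ℂ)
      + (1 : Matrix (Fin dS) (Fin dS) ℂ) ⊗ₖ LA with hLdef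
  set A : Matrix (Fin dS × Fin dA) (Fin dS × Fin dA) ℂ :=
    Uᴴ * ((1 : Matrix (Fin dS) (Fin dS) ℂ) ⊗ₖ P) * U with hAdef
  have hML : M * LS = LS * M := by
    have h1 : OS * ρ * LS = LS * (OS * ρ) := by
      rw [mul_assoc, hρL, ← mul_assoc, hOSL, mul_assoc]
    have h2 : ρ * OS * LS = LS * (ρ * OS) := by
      rw [mul_assoc, hOSL, ← mul_assoc, hρL, mul_assoc]
    simp [hMdef, add_mul, mul_add, h1, h2]
  -- P commutes with L
  have hPLcomm : ((1 : Matrix (Fin dS) (Fin dS) ℂ) ⊗ₖ P) * L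
      = L * ((1 : Matrix (Fin dS) (Fin dS) ℂ) ⊗ₖ P) := by
    simp only [hLdef, mul_add, add_mul, ← Matrix.mul_kronecker_mul]
    rw [hPL]
    simp
  -- Uᴴ commutes with L
  have hULH : Uᴴ * L = L * Uᴴ := by
    calc Uᴴ * L = Uᴴ * L * (U * Uᴴ) := by rw [hUU', mul_one]
    _ = Uᴴ * (L * U) * Uᴴ := by noncomm_ring
    _ = Uᴴ * (U * L) * Uᴴ := by rw [← hUL]
    _ = L * Uᴴ := by rw [← mul_assoc Uᴴ U L, hUU, one_mul]
  -- A commutes with L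
  have hAL : A * L = L * A := by
    calc A * L = Uᴴ * ((1 : Matrix (Fin dS) (Fin dS) ℂ) ⊗ₖ P) * (U * L) := by
          rw [hAdef]; noncomm_ring
    _ = Uᴴ * (((1 : Matrix (Fin dS) (Fin dS) ℂ) ⊗ₖ P) * L) * U := by rw [hUL]; noncomm_ring
    _ = (Uᴴ * L) * ((1 : Matrix (Fin dS) (Fin dS) ℂ) ⊗ₖ P) * U := by rw [hPLcomm]; noncomm_ring
    _ = L * A := by rw [hULH, hAdef]; noncomm_ring
  -- spectral facts
  have hLAQ : ∀ μ, LA * QA μ = (lamA μ : ℂ) • QA μ := by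
    intro μ
    rw [hLAspec, Finset.sum_mul]
    rw [Finset.sum_eq_single μ]
    · rw [smul_mul_assoc, hQAorth, if_pos rfl]
    · intro ν _ hν; rw [smul_mul_assoc, hQAorth, if_neg hν, smul_zero]
    · simp
  have hQLA : ∀ μ, QA μ * LA = (lamA μ : ℂ) • QA μ := by
    intro μ
    rw [hLAspec, Finset.mul_sum]
    rw [Finset.sum_eq_single μ]
    · rw [mul_smul_comm, hQAorth, if_pos rfl]
    · intro ν _ hν; rw [mul_smul_comm, hQAorth, if_neg (Ne.symm hν), smul_zero]
    · simp
  set E : ιA → Matrix (Fin dS × Fin dA) (Fin dS × Fin dA) ℂ :=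
    fun μ => (1 : Matrix (Fin dS) (Fin dS) ℂ) ⊗ₖ QA μ with hEdef
  have hEL : ∀ μ, E μ * L = (LS ⊗ₖ 1) * E μ + (lamA μ : ℂ) • E μ := by
    intro μ
    simp only [hEdef, hLdef, mul_add, ← Matrix.mul_kronecker_mul, hQLA, one_mul, mul_one]
    rw [Matrix.kronecker_smul]
  have hLE : ∀ μ, L * E μ = (LS ⊗ₖ 1) * E μ + (lamA μ : ℂ) • E μ := by
    intro μ
    simp only [hEdef, hLdef, add_mul, ← Matrix.mul_kronecker_mul, hLAQ, one_mul, mul_one]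
    rw [Matrix.kronecker_smul]
  -- key vanishing lemma
  have key : ∀ μ ν, μ ≠ ν → (A * (M ⊗ₖ (QA μ * ϱ * QA ν))).trace = 0 := by
    intro μ ν hμν
    set Y : Matrix (Fin dS × Fin dA) (Fin dS × Fin dA) ℂ := M ⊗ₖ (QA μ * ϱ * QA ν) with hYdef
    set C : Matrix (Fin dS × Fin dA) (Fin dS × Fin dA) ℂ := E ν * A * E μ with hCdef
    have hEY : E μ * Y = Y := by
      simp only [hEdef, hYdef, ← Matrix.mul_kronecker_mul, one_mul]
      rw [← mul_assoc, ← mul_assoc, hQAorth, if_pos rfl]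
    have hYE : Y * E ν = Y := by
      simp only [hEdef, hYdef, ← Matrix.mul_kronecker_mul, mul_one]
      rw [mul_assoc, hQAorth, if_pos rfl]
    have hYL : Y * (LS ⊗ₖ 1) = (LS ⊗ₖ 1) * Y := by
      simp only [hYdef, ← Matrix.mul_kronecker_mul, one_mul, mul_one, hML]
    -- C satisfies the eigen-commutator relation
    have hC : C * (LS ⊗ₖ 1) = (LS ⊗ₖ 1) * C + ((lamA ν : ℂ) - (lamA μ : ℂ)) • C := by
      have h1 : E μ * (LS ⊗ₖ 1) = L * E μ - (lamA μ : ℂ) • E μ := by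
        have h3 := hLE μ
        have h2 : E μ * (LS ⊗ₖ 1) = (LS ⊗ₖ 1) * E μ := by
          simp only [hEdef, ← Matrix.mul_kronecker_mul, one_mul, mul_one]
        rw [h2, h3]; abel
      calc C * (LS ⊗ₖ 1) = E ν * A * (E μ * (LS ⊗ₖ 1)) := by rw [hCdef]; noncomm_ring
      _ = E ν * A * (L * E μ) - (lamA μ : ℂ) • C := by
          rw [h1, mul_sub, hCdef, mul_smul_comm, mul_assoc]
      _ = E ν * (A * L) * E μ - (lamA μ : ℂ) • C := by congr 1; noncomm_ring
      _ = (E ν * L) * A * E μ - (lamA μ : ℂ) • C := by rw [hAL]; congr 1; noncomm_ring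
      _ = (LS ⊗ₖ 1) * C + (lamA ν : ℂ) • C - (lamA μ : ℂ) • C := by
          rw [hEL ν, hCdef]
          simp only [add_mul, smul_mul_assoc, mul_assoc]
      _ = (LS ⊗ₖ 1) * C + ((lamA ν : ℂ) - (lamA μ : ℂ)) • C := by
          rw [sub_smul, add_sub_assoc]
    have htrCY : (A * Y).trace = (C * Y).trace := by
      have e1 : A * Y = A * E μ * Y * E ν := by
        conv_lhs => rw [← hYE, ← hEY]
        noncomm_ring
      have e2 : E ν * (A * E μ) * Y = C * Y := by rw [hCdef]; noncomm_ring
      rw [e1, Matrix.trace_mul_cycle, e2]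
    have hzero : ((lamA ν : ℂ) - (lamA μ : ℂ)) * (C * Y).trace = 0 := by
      have h1 : (C * (LS ⊗ₖ 1) * Y).trace = ((LS ⊗ₖ 1) * C * Y).trace
          + ((lamA ν : ℂ) - (lamA μ : ℂ)) * (C * Y).trace := by
        rw [hC, add_mul, smul_mul_assoc, Matrix.trace_add, Matrix.trace_smul]
        simp
      have h2 : (C * (LS ⊗ₖ 1) * Y).trace = ((LS ⊗ₖ 1) * C * Y).trace := by
        rw [show C * (LS ⊗ₖ 1) * Y = C * ((LS ⊗ₖ 1) * Y) by noncomm_ring, ← hYL,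
          show C * (Y * (LS ⊗ₖ 1)) = (C * Y) * (LS ⊗ₖ 1) by noncomm_ring,
          Matrix.trace_mul_comm,
          show (LS ⊗ₖ 1) * (C * Y) = (LS ⊗ₖ 1) * C * Y by noncomm_ring]
      rw [h2] at h1
      exact left_eq_add.mp h1
    have hδ : ((lamA ν : ℂ) - (lamA μ : ℂ)) ≠ 0 := by
      intro h
      apply hμν
      apply hlamA
      have h4 : (lamA ν : ℂ) = (lamA μ : ℂ) := sub_eq_zero.mp h
      exact_mod_cast h4.symm
    rw [htrCY]
    exact (mul_eq_zero.mp hzero).resolve_left hδ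
  -- kronecker distributes over sums
  have kron_sum : ∀ (N : ιA → ιA → Matrix (Fin dA) (Fin dA) ℂ),
      M ⊗ₖ (∑ μ, ∑ ν, N μ ν) = ∑ μ, ∑ ν, M ⊗ₖ N μ ν := by
    intro N
    ext ⟨i, k⟩ ⟨j, l⟩
    simp [Matrix.kroneckerMap_apply, Finset.mul_sum, Matrix.sum_apply]
  -- reduce traces to A
  have hred : ∀ X : Matrix (Fin dS × Fin dA) (Fin dS × Fin dA) ℂ,
      (((1 : Matrix (Fin dS) (Fin dS) ℂ) ⊗ₖ P) * (U * X * Uᴴ)).trace = (A * X).trace := by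
    intro X
    rw [Matrix.trace_mul_comm, hAdef,
      show U * X * Uᴴ * ((1 : Matrix (Fin dS) (Fin dS) ℂ) ⊗ₖ P)
        = U * (X * (Uᴴ * ((1 : Matrix (Fin dS) (Fin dS) ℂ) ⊗ₖ P))) by noncomm_ring,
      Matrix.trace_mul_comm,
      show X * (Uᴴ * ((1 : Matrix (Fin dS) (Fin dS) ℂ) ⊗ₖ P)) * U
        = X * (Uᴴ * ((1 : Matrix (Fin dS) (Fin dS) ℂ) ⊗ₖ P) * U) by noncomm_ring,
      Matrix.trace_mul_comm]
  rw [hred, hred]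
  congr 1
  have hϱsum : ϱ = ∑ μ, ∑ ν, QA μ * ϱ * QA ν := by
    conv_lhs => rw [show ϱ = (∑ μ, QA μ) * ϱ * (∑ ν, QA ν) by rw [hQAsum]; simp]
    rw [Finset.sum_mul, Finset.sum_mul]
    exact Finset.sum_congr rfl fun μ _ => by rw [Finset.mul_sum]
  have hdiag : (∑ μ, QA μ * ϱ * QA μ) = ∑ μ, ∑ ν, if μ = ν then QA μ * ϱ * QA ν else 0 := by
    exact Finset.sum_congr rfl fun μ _ => by simp
  conv_lhs => rw [hϱsum]
  rw [hdiag, kron_sum, kron_sum]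
  rw [Finset.mul_sum, Finset.mul_sum, Matrix.trace_sum, Matrix.trace_sum]
  refine Finset.sum_congr rfl fun μ _ => ?_
  rw [Finset.mul_sum, Finset.mul_sum, Matrix.trace_sum, Matrix.trace_sum]
  refine Finset.sum_congr rfl fun ν _ => ?_
  by_cases h : μ = ν
  · simp [h]
  · rw [key μ ν h]
    rw [if_neg h]
    simp
end

section
/- Measurement probabilities are insensitive to system coherence under symmetry: if U commutes with L = L_S⊗1 + 1⊗L_A, P^x commutes with L_A, and ϱ commutes with L_A, then for every density operator ρ on H_S, tr[(1 ⊗ P^x) U(ρ⊗ϱ)U†] = tr[(1 ⊗ P^x) U(Φ_{L_S}(ρ)⊗ϱ)U†]. -/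
open Matrix BigOperators Kronecker
open scoped ComplexOrder

/-- Measurement probabilities are insensitive to system coherence
under symmetry: if U commutes with L_S⊗1+1⊗L_A, Pˣ commutes with L_A, and the
apparatus state ϱ commutes with L_A, then for every density operator ρ,
tr[(1⊗Pˣ)U(ρ⊗ϱ)U†] = tr[(1⊗Pˣ)U(Φ_{L_S}(ρ)⊗ϱ)U†], where
Φ_{L_S}(ρ) = Σ_m Q_S^m ρ Q_S^m with Q_S^m the spectral projections of L_S. -/
theorem measurement_probabilities_coherence_insensitive {dS dA : ℕ}
    {ιS : Type*} [Fintype ιS] [DecidableEq ιS]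
    (LS : Matrix (Fin dS) (Fin dS) ℂ) (hLS : LS.IsHermitian)
    (LA : Matrix (Fin dA) (Fin dA) ℂ) (hLA : LA.IsHermitian)
    (QS : ιS → Matrix (Fin dS) (Fin dS) ℂ)
    (hQSherm : ∀ m, (QS m).IsHermitian)
    (hQSorth : ∀ m n, QS m * QS n = if m = n then QS m else 0)
    (hQSsum : ∑ m, QS m = 1)
    (lamS : ιS → ℝ) (hlamS : Function.Injective lamS)
    (hLSspec : LS = ∑ m, (lamS m : ℂ) • QS m)
    (U : Matrix (Fin dS × Fin dA) (Fin dS × Fin dA) ℂ)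
    (hU : U ∈ Matrix.unitaryGroup (Fin dS × Fin dA) ℂ)
    (hUL : U * (LS ⊗ₖ (1 : Matrix (Fin dA) (Fin dA) ℂ)
             + (1 : Matrix (Fin dS) (Fin dS) ℂ) ⊗ₖ LA)
         = (LS ⊗ₖ (1 : Matrix (Fin dA) (Fin dA) ℂ)
             + (1 : Matrix (Fin dS) (Fin dS) ℂ) ⊗ₖ LA) * U)
    (P : Matrix (Fin dA) (Fin dA) ℂ) (hPproj : P * P = P) (hPherm : P.IsHermitian)
    (hPL : P * LA = LA * P)
    (ϱ : Matrix (Fin dA) (Fin dA) ℂ) (hϱ : ϱ.PosSemidef) (hϱtr : ϱ.trace = 1)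
    (hϱL : ϱ * LA = LA * ϱ)
    (ρ : Matrix (Fin dS) (Fin dS) ℂ) (hρ : ρ.PosSemidef) (hρtr : ρ.trace = 1) :
    ((((1 : Matrix (Fin dS) (Fin dS) ℂ) ⊗ₖ P) * (U * (ρ ⊗ₖ ϱ) * Uᴴ)).trace
      = (((1 : Matrix (Fin dS) (Fin dS) ℂ) ⊗ₖ P) *
          (U * ((∑ m, QS m * ρ * QS m) ⊗ₖ ϱ) * Uᴴ)).trace) := by
  set L : Matrix (Fin dS × Fin dA) (Fin dS × Fin dA) ℂ :=
    LS ⊗ₖ (1 : Matrix (Fin dA) (Fin dA) ℂ)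
      + (1 : Matrix (Fin dS) (Fin dS) ℂ) ⊗ₖ LA with hLdef
  -- the linear functional
  set g : Matrix (Fin dS) (Fin dS) ℂ →ₗ[ℂ] ℂ :=
    { toFun := fun σ => (((1 : Matrix (Fin dS) (Fin dS) ℂ) ⊗ₖ P)
        * (U * (σ ⊗ₖ ϱ) * Uᴴ)).trace
      map_add' := by
        intro σ τ
        simp [Matrix.add_kronecker, Matrix.mul_add, Matrix.add_mul, trace_add]
      map_smul' := by
        intro c σ
        simp [Matrix.smul_kronecker, Matrix.mul_smul, Matrix.smul_mul] } with hgdef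
  show g ρ = g (∑ m, QS m * ρ * QS m)
  -- unitarity facts
  have hUU : U * Uᴴ = 1 := by
    have := Matrix.mem_unitaryGroup_iff.mp hU
    simpa [Matrix.star_eq_conjTranspose] using this
  have hU'U : Uᴴ * U = 1 := by
    have := Matrix.mem_unitaryGroup_iff'.mp hU
    simpa [Matrix.star_eq_conjTranspose] using this
  have hULstar : Uᴴ * L = L * Uᴴ := by
    calc Uᴴ * L = Uᴴ * L * U * Uᴴ := by rw [mul_assoc (Uᴴ * L), hUU, mul_one]
    _ = Uᴴ * (U * L) * Uᴴ := by rw [mul_assoc Uᴴ L U, ← hUL]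
    _ = L * Uᴴ := by rw [← mul_assoc Uᴴ U L, hU'U, one_mul]
  have hPL' : ((1 : Matrix (Fin dS) (Fin dS) ℂ) ⊗ₖ P) * L
      = L * ((1 : Matrix (Fin dS) (Fin dS) ℂ) ⊗ₖ P) := by
    simp only [hLdef, Matrix.mul_add, Matrix.add_mul, ← Matrix.mul_kronecker_mul,
      one_mul, mul_one, hPL]
  -- key swap lemma
  have key : ∀ σ : Matrix (Fin dS) (Fin dS) ℂ, g (LS * σ) = g (σ * LS) := by
    intro σ
    have hX : L * (σ ⊗ₖ ϱ) = (LS * σ) ⊗ₖ ϱ + σ ⊗ₖ (LA * ϱ) := by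
      simp [hLdef, Matrix.add_mul, ← Matrix.mul_kronecker_mul]
    have hX' : (σ ⊗ₖ ϱ) * L = (σ * LS) ⊗ₖ ϱ + σ ⊗ₖ (LA * ϱ) := by
      simp [hLdef, Matrix.mul_add, ← Matrix.mul_kronecker_mul, hϱL]
    have main : (((1 : Matrix (Fin dS) (Fin dS) ℂ) ⊗ₖ P)
          * (U * (L * (σ ⊗ₖ ϱ)) * Uᴴ)).trace
        = (((1 : Matrix (Fin dS) (Fin dS) ℂ) ⊗ₖ P)
          * (U * ((σ ⊗ₖ ϱ) * L) * Uᴴ)).trace := by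
      have e1 : U * (L * (σ ⊗ₖ ϱ)) * Uᴴ = L * (U * (σ ⊗ₖ ϱ) * Uᴴ) := by
        rw [← mul_assoc, hUL]; noncomm_ring
      have e2 : U * ((σ ⊗ₖ ϱ) * L) * Uᴴ = (U * (σ ⊗ₖ ϱ) * Uᴴ) * L := by
        rw [mul_assoc, mul_assoc, ← hULstar]; noncomm_ring
      rw [e1, e2, ← mul_assoc, hPL', Matrix.trace_mul_cycle,
        Matrix.trace_mul_comm]
    rw [hX, hX'] at main
    have expand : ∀ A B : Matrix (Fin dS × Fin dA) (Fin dS × Fin dA) ℂ,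
        (((1 : Matrix (Fin dS) (Fin dS) ℂ) ⊗ₖ P) * (U * (A + B) * Uᴴ)).trace
        = (((1 : Matrix (Fin dS) (Fin dS) ℂ) ⊗ₖ P) * (U * A * Uᴴ)).trace
          + (((1 : Matrix (Fin dS) (Fin dS) ℂ) ⊗ₖ P) * (U * B * Uᴴ)).trace := by
      intro A B
      simp [Matrix.mul_add, Matrix.add_mul, trace_add]
    rw [expand, expand] at main
    have : g (LS * σ)
        + (((1 : Matrix (Fin dS) (Fin dS) ℂ) ⊗ₖ P)
            * (U * (σ ⊗ₖ (LA * ϱ)) * Uᴴ)).trace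
        = g (σ * LS)
        + (((1 : Matrix (Fin dS) (Fin dS) ℂ) ⊗ₖ P)
            * (U * (σ ⊗ₖ (LA * ϱ)) * Uᴴ)).trace := main
    exact add_right_cancel this
  -- spectral facts
  have hLQ : ∀ m, LS * QS m = (lamS m : ℂ) • QS m := by
    intro m
    rw [hLSspec, Finset.sum_mul]
    simp [smul_mul_assoc, hQSorth]
  have hQL : ∀ n, QS n * LS = (lamS n : ℂ) • QS n := by
    intro n
    rw [hLSspec, Finset.mul_sum]
    simp [mul_smul_comm, hQSorth]
  -- off-diagonal vanishing
  have offdiag : ∀ m n, m ≠ n → g (QS m * ρ * QS n) = 0 := by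
    intro m n hmn
    have h1 : LS * (QS m * ρ * QS n) = (lamS m : ℂ) • (QS m * ρ * QS n) := by
      rw [← mul_assoc, ← mul_assoc, hLQ, smul_mul_assoc, smul_mul_assoc]
    have h2 : (QS m * ρ * QS n) * LS = (lamS n : ℂ) • (QS m * ρ * QS n) := by
      rw [mul_assoc, hQL, mul_smul_comm]
    have := key (QS m * ρ * QS n)
    rw [h1, h2, LinearMap.map_smul, LinearMap.map_smul] at this
    have hne : (lamS m : ℂ) ≠ (lamS n : ℂ) := by
      exact_mod_cast fun h => hmn (hlamS (by exact_mod_cast h))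
    have hsub : ((lamS m : ℂ) - lamS n) * g (QS m * ρ * QS n) = 0 := by
      rw [sub_mul]
      simpa [smul_eq_mul] using sub_eq_zero.mpr this
    rcases mul_eq_zero.mp hsub with h | h
    · exact absurd (sub_eq_zero.mp h) hne
    · exact h
  -- decomposition
  have hρdecomp : ρ = ∑ m, ∑ n, QS m * ρ * QS n := by
    calc ρ = (∑ m, QS m) * ρ * (∑ n, QS n) := by rw [hQSsum, one_mul, mul_one]
    _ = ∑ m, ∑ n, QS m * ρ * QS n := by
        rw [Finset.sum_mul, Finset.sum_mul]
        exact Finset.sum_congr rfl fun m _ => by rw [Finset.mul_sum]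
  conv_lhs => rw [hρdecomp]
  rw [map_sum, map_sum]
  refine Finset.sum_congr rfl fun m _ => ?_
  rw [map_sum, Finset.sum_eq_single m (fun n _ hnm => offdiag m n (Ne.symm hnm)) (by simp)]
end

section
/- Average energy change under thermal operations is coherence-independent: if U is a unitary on H_S⊗H_A commuting with H_S⊗1 + 1⊗H_A (H_S, H_A self-adjoint Hamiltonians) and ϱ commutes with H_A, then tr[(H_S⊗1) U(ρ⊗ϱ)U†] = tr[(H_S⊗1) U(Φ_{H_S}(ρ)⊗ϱ)U†] for every density operator ρ on H_S, where Φ_{H_S} dephases ρ in the eigenbasis of H_S. -/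
open Matrix BigOperators Kronecker
open scoped ComplexOrder

set_option maxHeartbeats 1000000 in
/-- Average energy change under thermal operations is
coherence-independent: if U is unitary commuting with H_S⊗1+1⊗H_A and the
apparatus state ϱ commutes with H_A, then for every density operator ρ,
tr[(H_S⊗1)U(ρ⊗ϱ)U†] = tr[(H_S⊗1)U(Φ_{H_S}(ρ)⊗ϱ)U†], where
Φ_{H_S}(ρ) = Σ_m Q^m ρ Q^m dephases ρ in the eigenbasis of H_S. -/
theorem thermal_operation_average_energy_coherence_independent {dS dA : ℕ}
    {ιS : Type*} [Fintype ιS] [DecidableEq ιS]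
    (HS : Matrix (Fin dS) (Fin dS) ℂ) (hHS : HS.IsHermitian)
    (HA : Matrix (Fin dA) (Fin dA) ℂ) (hHA : HA.IsHermitian)
    (Q : ιS → Matrix (Fin dS) (Fin dS) ℂ)
    (hQherm : ∀ m, (Q m).IsHermitian)
    (hQorth : ∀ m n, Q m * Q n = if m = n then Q m else 0)
    (hQsum : ∑ m, Q m = 1)
    (lam : ιS → ℝ) (hlam : Function.Injective lam)
    (hHSspec : HS = ∑ m, (lam m : ℂ) • Q m)
    (U : Matrix (Fin dS × Fin dA) (Fin dS × Fin dA) ℂ)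
    (hU : U ∈ Matrix.unitaryGroup (Fin dS × Fin dA) ℂ)
    (hUL : U * (HS ⊗ₖ (1 : Matrix (Fin dA) (Fin dA) ℂ)
             + (1 : Matrix (Fin dS) (Fin dS) ℂ) ⊗ₖ HA)
         = (HS ⊗ₖ (1 : Matrix (Fin dA) (Fin dA) ℂ)
             + (1 : Matrix (Fin dS) (Fin dS) ℂ) ⊗ₖ HA) * U)
    (ϱ : Matrix (Fin dA) (Fin dA) ℂ) (hϱ : ϱ.PosSemidef) (hϱtr : ϱ.trace = 1)
    (hϱH : ϱ * HA = HA * ϱ)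
    (ρ : Matrix (Fin dS) (Fin dS) ℂ) (hρ : ρ.PosSemidef) (hρtr : ρ.trace = 1) :
    ((HS ⊗ₖ (1 : Matrix (Fin dA) (Fin dA) ℂ)) * (U * (ρ ⊗ₖ ϱ) * Uᴴ)).trace
      = ((HS ⊗ₖ (1 : Matrix (Fin dA) (Fin dA) ℂ)) *
          (U * ((∑ m, Q m * ρ * Q m) ⊗ₖ ϱ) * Uᴴ)).trace := by
  set A := HS ⊗ₖ (1 : Matrix (Fin dA) (Fin dA) ℂ) with hA
  set B := (1 : Matrix (Fin dS) (Fin dS) ℂ) ⊗ₖ HA with hB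
  -- HS acts on Q n by scalar lam n
  have hHSQ : ∀ n, HS * Q n = (lam n : ℂ) • Q n := by
    intro n
    rw [hHSspec, Finset.sum_mul]
    have : ∀ m ∈ Finset.univ, ((lam m : ℂ) • Q m) * Q n
        = if m = n then (lam n : ℂ) • Q n else 0 := by
      intro m _
      rw [smul_mul_assoc, hQorth m n]
      split_ifs with h
      · subst h; rfl
      · simp
    rw [Finset.sum_congr rfl this, Finset.sum_ite_eq' Finset.univ n
      (fun _ => (lam n : ℂ) • Q n)]
    simp
  have hQHS : ∀ m, Q m * HS = (lam m : ℂ) • Q m := by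
    intro m
    rw [hHSspec, Finset.mul_sum]
    have : ∀ n ∈ Finset.univ, Q m * ((lam n : ℂ) • Q n)
        = if n = m then (lam m : ℂ) • Q m else 0 := by
      intro n _
      rw [mul_smul_comm, hQorth m n]
      rcases eq_or_ne n m with h | h
      · subst h; simp
      · simp [Ne.symm h, h]
    rw [Finset.sum_congr rfl this, Finset.sum_ite_eq' Finset.univ m
      (fun _ => (lam m : ℂ) • Q m)]
    simp
  -- unitarity
  have hU1 : U * Uᴴ = 1 := by
    have := Matrix.mem_unitaryGroup_iff.mp hU
    simpa [Matrix.star_eq_conjTranspose] using this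
  have hU2 : Uᴴ * U = 1 := by
    have := Matrix.mem_unitaryGroup_iff'.mp hU
    simpa [Matrix.star_eq_conjTranspose] using this
  have hAB : A * B = B * A := by
    rw [hA, hB, ← Matrix.mul_kronecker_mul, ← Matrix.mul_kronecker_mul]
    simp
  have hUH : U * (A + B) = (A + B) * U := hUL
  have hUHc : Uᴴ * (A + B) = (A + B) * Uᴴ := by
    calc Uᴴ * (A + B) = Uᴴ * (A + B) * (U * Uᴴ) := by rw [hU1, mul_one]
    _ = Uᴴ * ((A + B) * U) * Uᴴ := by simp only [mul_assoc]
    _ = Uᴴ * (U * (A + B)) * Uᴴ := by rw [← hUH]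
    _ = (A + B) * Uᴴ := by rw [← mul_assoc, hU2, one_mul]
  have hAH : A * (A + B) = (A + B) * A := by
    rw [mul_add, add_mul, hAB]
  have ksum : ∀ (f : ιS → Matrix (Fin dS) (Fin dS) ℂ),
      (∑ p, f p) ⊗ₖ ϱ = ∑ p, (f p) ⊗ₖ ϱ := by
    intro f
    ext ⟨i, k⟩ ⟨j, l⟩
    simp [Matrix.kroneckerMap_apply, Matrix.sum_apply, Finset.sum_mul]
  -- key vanishing lemma
  have key : ∀ m n, m ≠ n →
      (A * (U * ((Q m * ρ * Q n) ⊗ₖ ϱ) * Uᴴ)).trace = 0 := by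
    intro m n hmn
    set M := Q m * ρ * Q n with hM
    set X := M ⊗ₖ ϱ with hX
    have hAX : A * X = (lam m : ℂ) • X := by
      rw [hA, hX, ← Matrix.mul_kronecker_mul, one_mul]
      have : HS * M = (lam m : ℂ) • M := by
        rw [hM, ← mul_assoc, ← mul_assoc, hHSQ m, smul_mul_assoc, smul_mul_assoc]
      rw [this, Matrix.smul_kronecker]
    have hXA : X * A = (lam n : ℂ) • X := by
      rw [hA, hX, ← Matrix.mul_kronecker_mul, mul_one]
      have : M * HS = (lam n : ℂ) • M := by
        rw [hM, mul_assoc, hQHS n, mul_smul_comm]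
      rw [this, Matrix.smul_kronecker]
    have hBX : B * X = X * B := by
      rw [hB, hX, ← Matrix.mul_kronecker_mul, ← Matrix.mul_kronecker_mul,
        one_mul, mul_one, hϱH]
    have hcomm : (A + B) * X - X * (A + B) = ((lam m : ℂ) - (lam n : ℂ)) • X := by
      rw [add_mul, mul_add, hAX, hXA, hBX, sub_smul]
      abel
    have hzero : (A * (U * ((A + B) * X - X * (A + B)) * Uᴴ)).trace = 0 := by
      have e1 : U * ((A + B) * X) * Uᴴ = (A + B) * (U * X * Uᴴ) := by
        rw [← mul_assoc U (A + B) X, hUH]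
        simp only [mul_assoc]
      have e2 : U * (X * (A + B)) * Uᴴ = (U * X * Uᴴ) * (A + B) := by
        rw [← mul_assoc U X (A + B), mul_assoc (U * X) (A + B) Uᴴ, ← hUHc]
        simp only [mul_assoc]
      rw [mul_sub, sub_mul, mul_sub, Matrix.trace_sub, e1, e2,
        ← mul_assoc A (A + B) (U * X * Uᴴ), hAH,
        mul_assoc (A + B) A (U * X * Uᴴ), Matrix.trace_mul_comm (A + B),
        ← mul_assoc A (U * X * Uᴴ) (A + B), Matrix.trace_mul_comm _ (A + B),
        ← mul_assoc, sub_self]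
    rw [hcomm] at hzero
    have hne : (lam m : ℂ) - (lam n : ℂ) ≠ 0 := by
      rw [sub_ne_zero]
      exact_mod_cast fun h => hmn (hlam (by exact_mod_cast h))
    have : ((lam m : ℂ) - (lam n : ℂ)) * (A * (U * X * Uᴴ)).trace = 0 := by
      rw [← hzero, Matrix.mul_smul, Matrix.smul_mul, Matrix.mul_smul,
        Matrix.trace_smul, smul_eq_mul]
    exact (mul_eq_zero.mp this).resolve_left hne
  -- expand ρ into blocks
  have hρexp : ρ = ∑ m, ∑ n, Q m * ρ * Q n := by
    calc ρ = (∑ m, Q m) * ρ * (∑ n, Q n) := by rw [hQsum, one_mul, mul_one]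
    _ = ∑ m, ∑ n, Q m * ρ * Q n := by
        rw [Finset.sum_mul, Finset.sum_mul]
        exact Finset.sum_congr rfl fun m _ => Finset.mul_sum _ _ _
  have lhs_eq : (A * (U * (ρ ⊗ₖ ϱ) * Uᴴ)).trace
      = ∑ m, ∑ n, (A * (U * ((Q m * ρ * Q n) ⊗ₖ ϱ) * Uᴴ)).trace := by
    conv_lhs => rw [hρexp]
    rw [ksum _, Finset.mul_sum, Finset.sum_mul, Finset.mul_sum,
      Matrix.trace_sum]
    apply Finset.sum_congr rfl
    intro m _
    rw [ksum _, Finset.mul_sum, Finset.sum_mul, Finset.mul_sum,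
      Matrix.trace_sum]
  have rhs_eq : (A * (U * ((∑ m, Q m * ρ * Q m) ⊗ₖ ϱ) * Uᴴ)).trace
      = ∑ m, (A * (U * ((Q m * ρ * Q m) ⊗ₖ ϱ) * Uᴴ)).trace := by
    rw [ksum _, Finset.mul_sum, Finset.sum_mul, Finset.mul_sum,
      Matrix.trace_sum]
  rw [lhs_eq, rhs_eq]
  apply Finset.sum_congr rfl
  intro m _
  rw [Finset.sum_eq_single m]
  · intro n _ hnm
    exact key m n (Ne.symm hnm)
  · intro h; exact absurd (Finset.mem_univ m) h
end

section
/- Theorem 2 for the two-qubit Jaynes–Cummings model ('after' values, unnormalized): let U = exp(−iθ(σ⁺⊗σ⁻ + σ⁻⊗σ⁺)) on ℂ²⊗ℂ², let O_S and P^x be diagonal in the computational basis (i.e., diagonal 2×2 matrices, P^x a projection), and let ρ⊗ϱ have a real symmetric matrix in the computational product basis (ρ, ϱ real symmetric density matrices). Then tr[(O_S ⊗ P^x) U(ρ⊗ϱ)U†] = tr[(O_S ⊗ P^x) U(Φ_N(ρ)⊗ϱ)U†], where Φ_N(ρ) is the diagonal part of ρ in the computational basis. -/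
/-!
Let `Z = diag(1, -1)` and `W = Z ⊗ 1`. Dephasing is the `Z`-twirl, `Φ_N(ρ) = (ρ + ZρZ)/2`, and
`(ZρZ) ⊗ ϱ = W(ρ ⊗ ϱ)W`, so it suffices that conjugating the initial state by `W` leaves the
expectation unchanged. `W` anticommutes with the flip-flop Hamiltonian, hence `WUW = U†`, and it
commutes with the diagonal observable `O = O_S ⊗ Pˣ`. This turns `U W(ρ⊗ϱ)W U†` into the
backward evolution `W U†(ρ⊗ϱ)U W`, and transposing the trace undoes the time reversal because
`U`, `O` and the real state `ρ ⊗ ϱ` are all symmetric.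
-/

open Matrix Kronecker
open scoped ComplexOrder

section Trace

variable {n α : Type*} [Fintype n] [CommRing α]

theorem trace_mul_conjTranspose_conj_eq_of_isSymm [StarRing α] {O U X : Matrix n n α}
    (hO : O.IsSymm) (hU : U.IsSymm) (hX : X.IsSymm) :
    (O * (Uᴴ * X * U)).trace = (O * (U * X * Uᴴ)).trace := by
  have hUH : Uᴴ.IsSymm := by
    rw [IsSymm, conjTranspose_transpose, ← transpose_conjTranspose, hU.eq]
  rw [← trace_transpose]
  simp only [transpose_mul, hO.eq, hU.eq, hX.eq, hUH.eq, ← Matrix.mul_assoc]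
  rw [trace_mul_comm, ← Matrix.mul_assoc, ← Matrix.mul_assoc]

theorem trace_mul_conj_of_conj_eq_self {O W : Matrix n n α} (hWO : W * O * W = O)
    (Y : Matrix n n α) : (O * (W * Y * W)).trace = (O * Y).trace := by
  rw [← Matrix.mul_assoc, trace_mul_cycle, ← Matrix.mul_assoc, hWO]

theorem trace_evolution_conj_eq [StarRing α] {O U W X : Matrix n n α} (hUW : U * W = W * Uᴴ)
    (hWO : W * O * W = O) (hO : O.IsSymm) (hU : U.IsSymm) (hX : X.IsSymm) :
    (O * (U * (W * X * W) * Uᴴ)).trace = (O * (U * X * Uᴴ)).trace := by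
  have hWU : W * Uᴴ = U * W := hUW.symm
  calc (O * (U * (W * X * W) * Uᴴ)).trace = (O * (W * (Uᴴ * X * U) * W)).trace := by
        simp only [← Matrix.mul_assoc, hUW]
        simp only [Matrix.mul_assoc, hWU]
    _ = (O * (U * X * Uᴴ)).trace := by
        rw [trace_mul_conj_of_conj_eq_self hWO, trace_mul_conjTranspose_conj_eq_of_isSymm hO hU hX]

end Trace

section Evolution

variable {n : Type*} [Fintype n] [DecidableEq n]

theorem isSymm_exp_smul {H : Matrix n n ℂ} (hH : H.IsSymm) (c : ℂ) :
    (NormedSpace.exp (c • H)).IsSymm := by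
  rw [IsSymm, ← exp_transpose, transpose_smul, hH.eq]

theorem exp_smul_mul_eq_mul_conjTranspose {H W : Matrix n n ℂ} (hH : H.IsHermitian)
    (hWW : W * W = 1) (hWH : W * H * W = -H) (θ : ℝ) :
    NormedSpace.exp (-(Complex.I * θ) • H) * W
      = W * (NormedSpace.exp (-(Complex.I * θ) • H))ᴴ := by
  set U := NormedSpace.exp (-(Complex.I * θ) • H)
  have hWinv : W⁻¹ = W := inv_eq_right_inv hWW
  have hreverse : W * U * W = Uᴴ := by
    calc W * U * W = W * U * W⁻¹ := by rw [hWinv]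
      _ = NormedSpace.exp (W * (-(Complex.I * θ) • H) * W⁻¹) :=
        (exp_conj W _ ⟨⟨W, W, hWW, hWW⟩, rfl⟩).symm
      _ = Uᴴ := by
        rw [← exp_conjTranspose, conjTranspose_smul, hH.eq, hWinv, Matrix.mul_smul,
          Matrix.smul_mul, hWH]
        simp
  calc U * W = W * (W * U * W) := by simp only [← Matrix.mul_assoc, hWW, Matrix.one_mul]
    _ = W * Uᴴ := by rw [hreverse]

end Evolution

theorem Matrix.IsSymm.kronecker {m n α : Type*} [CommMagma α] {A : Matrix m m α}
    {B : Matrix n n α} (hA : A.IsSymm) (hB : B.IsSymm) : (A ⊗ₖ B).IsSymm := by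
  rw [IsSymm, ← kroneckerMap_transpose, hA.eq, hB.eq]

theorem Matrix.IsHermitian.isSymm_of_im_eq_zero {n : Type*} {A : Matrix n n ℂ}
    (hA : A.IsHermitian) (hreal : ∀ i j, (A i j).im = 0) : A.IsSymm := by
  ext i j
  rw [transpose_apply, ← hA.apply i j]
  exact Complex.conj_eq_iff_im.mpr (hreal j i) |>.symm

def pauliZ : Matrix (Fin 2) (Fin 2) ℂ := diagonal ![1, -1]

theorem pauliZ_mul_self : pauliZ * pauliZ = 1 := by
  rw [pauliZ, diagonal_mul_diagonal, ← diagonal_one]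
  congr 1
  ext i
  fin_cases i <;> norm_num

theorem pauliZ_mul_mul_pauliZ_of_isDiag {D : Matrix (Fin 2) (Fin 2) ℂ} (hD : D.IsDiag) :
    pauliZ * D * pauliZ = D := by
  rw [← hD.diagonal_diag, pauliZ, diagonal_mul_diagonal, diagonal_mul_diagonal]
  congr 1
  ext i
  fin_cases i <;> simp

theorem pauliZ_mul_single_mul_pauliZ {i j : Fin 2} (hij : i ≠ j) (a : ℂ) :
    pauliZ * single i j a * pauliZ = (-1 : ℂ) • single i j a := by
  ext k l
  fin_cases i <;> fin_cases j <;> fin_cases k <;> fin_cases l <;> simp_all [pauliZ]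

theorem diagonal_diag_eq_smul_add_pauliZ_conj (ρ : Matrix (Fin 2) (Fin 2) ℂ) :
    diagonal (fun i => ρ i i) = (2⁻¹ : ℂ) • (ρ + pauliZ * ρ * pauliZ) := by
  ext i j
  fin_cases i <;> fin_cases j <;> simp [pauliZ] <;> ring

def flipFlop : Matrix (Fin 2 × Fin 2) (Fin 2 × Fin 2) ℂ :=
  single 1 0 1 ⊗ₖ single 0 1 1 + single 0 1 1 ⊗ₖ single 1 0 1

theorem isHermitian_flipFlop : flipFlop.IsHermitian := by
  simp only [IsHermitian, flipFlop, conjTranspose_add, conjTranspose_kronecker,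
    conjTranspose_single, star_one, add_comm]

theorem isSymm_flipFlop : flipFlop.IsSymm := by
  simp only [IsSymm, flipFlop, transpose_add, ← kroneckerMap_transpose, transpose_single,
    add_comm]

theorem pauliZ_kronecker_one_conj_flipFlop :
    (pauliZ ⊗ₖ (1 : Matrix (Fin 2) (Fin 2) ℂ)) * flipFlop * (pauliZ ⊗ₖ 1) = -flipFlop := by
  simp only [flipFlop, Matrix.mul_add, Matrix.add_mul, ← mul_kronecker_mul, Matrix.one_mul,
    Matrix.mul_one, pauliZ_mul_single_mul_pauliZ Fin.zero_ne_one,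
    pauliZ_mul_single_mul_pauliZ Fin.zero_ne_one.symm, smul_kronecker]
  rw [← smul_add, neg_one_smul]

theorem thm2_two_qubit_jaynes_cummings_general (θ : ℝ)
    (σp σm : Matrix (Fin 2) (Fin 2) ℂ)
    (hσp : σp = Matrix.single 1 0 1)
    (hσm : σm = Matrix.single 0 1 1)
    (U : Matrix (Fin 2 × Fin 2) (Fin 2 × Fin 2) ℂ)
    (hU : U = NormedSpace.exp ((-(Complex.I * (θ : ℂ))) • (σp ⊗ₖ σm + σm ⊗ₖ σp)))
    (OS : Matrix (Fin 2) (Fin 2) ℂ)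
    (hOSdiag : ∀ i j, i ≠ j → OS i j = 0)
    (P : Matrix (Fin 2) (Fin 2) ℂ)
    (hPdiag : ∀ i j, i ≠ j → P i j = 0)
    (ρ : Matrix (Fin 2) (Fin 2) ℂ) (hρ : ρ.PosSemidef)
    (hρreal : ∀ i j, (ρ i j).im = 0)
    (ϱ : Matrix (Fin 2) (Fin 2) ℂ) (hϱ : ϱ.PosSemidef)
    (hϱreal : ∀ i j, (ϱ i j).im = 0) :
    ((OS ⊗ₖ P) * (U * (ρ ⊗ₖ ϱ) * Uᴴ)).trace
      = ((OS ⊗ₖ P) * (U * ((Matrix.diagonal fun i => ρ i i) ⊗ₖ ϱ) * Uᴴ)).trace := by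
  subst hσp hσm hU
  rw [← flipFlop]
  set W := pauliZ ⊗ₖ (1 : Matrix (Fin 2) (Fin 2) ℂ)
  have hOS : OS.IsDiag := fun i j h => hOSdiag i j h
  have hO : (OS ⊗ₖ P).IsDiag := hOS.kronecker fun i j h => hPdiag i j h
  have hWW : W * W = 1 := by
    rw [← mul_kronecker_mul, pauliZ_mul_self, Matrix.one_mul, one_kronecker_one]
  have hWO : W * (OS ⊗ₖ P) * W = OS ⊗ₖ P := by
    rw [← mul_kronecker_mul, ← mul_kronecker_mul, pauliZ_mul_mul_pauliZ_of_isDiag hOS,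
      Matrix.one_mul, Matrix.mul_one]
  have hdephase :
      (diagonal fun i => ρ i i) ⊗ₖ ϱ = (2⁻¹ : ℂ) • (ρ ⊗ₖ ϱ + W * (ρ ⊗ₖ ϱ) * W) := by
    rw [diagonal_diag_eq_smul_add_pauliZ_conj, smul_kronecker, add_kronecker,
      ← mul_kronecker_mul, ← mul_kronecker_mul, Matrix.one_mul, Matrix.mul_one]
  have hUW := exp_smul_mul_eq_mul_conjTranspose isHermitian_flipFlop hWW
    pauliZ_kronecker_one_conj_flipFlop θ
  have hconj := trace_evolution_conj_eq hUW hWO hO.isSymm (isSymm_exp_smul isSymm_flipFlop _)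
    ((hρ.1.isSymm_of_im_eq_zero hρreal).kronecker (hϱ.1.isSymm_of_im_eq_zero hϱreal))
  rw [hdephase, Matrix.mul_smul, Matrix.smul_mul, Matrix.mul_add, Matrix.add_mul, Matrix.mul_smul,
    trace_smul, Matrix.mul_add, trace_add, hconj, smul_eq_mul]
  ring

/-- Theorem 2 for the two-qubit Jaynes–Cummings model, 'after'
values, unnormalized: with U = exp(−iθ(σ⁺⊗σ⁻+σ⁻⊗σ⁺)), O_S and Pˣ diagonal
(Pˣ a projection), and ρ, ϱ density matrices with all entries real (hence
symmetric), tr[(O_S⊗Pˣ)U(ρ⊗ϱ)U†] = tr[(O_S⊗Pˣ)U(Φ_N(ρ)⊗ϱ)U†], where Φ_N(ρ)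
is the diagonal part of ρ. -/
theorem thm2_two_qubit_jaynes_cummings (θ : ℝ)
    (σp σm : Matrix (Fin 2) (Fin 2) ℂ)
    (hσp : σp = Matrix.single 1 0 1)
    (hσm : σm = Matrix.single 0 1 1)
    (U : Matrix (Fin 2 × Fin 2) (Fin 2 × Fin 2) ℂ)
    (hU : U = NormedSpace.exp ((-(Complex.I * (θ : ℂ))) • (σp ⊗ₖ σm + σm ⊗ₖ σp)))
    (OS : Matrix (Fin 2) (Fin 2) ℂ) (hOSherm : OS.IsHermitian)
    (hOSdiag : ∀ i j, i ≠ j → OS i j = 0)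
    (P : Matrix (Fin 2) (Fin 2) ℂ) (hPproj : P * P = P) (hPherm : P.IsHermitian)
    (hPdiag : ∀ i j, i ≠ j → P i j = 0)
    (ρ : Matrix (Fin 2) (Fin 2) ℂ) (hρ : ρ.PosSemidef) (hρtr : ρ.trace = 1)
    (hρreal : ∀ i j, (ρ i j).im = 0)
    (ϱ : Matrix (Fin 2) (Fin 2) ℂ) (hϱ : ϱ.PosSemidef) (hϱtr : ϱ.trace = 1)
    (hϱreal : ∀ i j, (ϱ i j).im = 0) :
    ((OS ⊗ₖ P) * (U * (ρ ⊗ₖ ϱ) * Uᴴ)).trace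
      = ((OS ⊗ₖ P) * (U * ((Matrix.diagonal fun i => ρ i i) ⊗ₖ ϱ) * Uᴴ)).trace :=
  thm2_two_qubit_jaynes_cummings_general θ σp σm hσp hσm U hU OS hOSdiag P hPdiag ρ hρ hρreal ϱ hϱ
    hϱreal
end
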